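/- The higher-order Courant bracket ⟦X+α, Y+β⟧ = [X,Y] + L_X β − L_Y α + ½(d i_Y α − d i_X β) satisfies the Jacobi identity up to an exact term: ⟦e₁,⟦e₂,e₃⟧⟧ + c.p. = d T(e₁,e₂,e₃), where T(e₁,e₂,e₃) = −(1/3)(⟨⟦e₁,e₂⟧, e₃⟩ + c.p.). -/
import Mathlib


/-- An abstract Cartan calculus: `C` plays the role of smooth functions `C^∞(M)`,
`V` the vector fields `𝔛(M)`, `Ω` the differential forms on a smooth manifold `M`,
with Lie bracket `bra`, exterior derivative `d`, interior product `ι`,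
Lie derivative `lie`, action of vector fields on functions `app`,
differential of functions `dC`, and wedge product `wdg`,
subject to the standard identities of the Cartan calculus. -/
structure CartanCalculus (C V Ω : Type*) [CommRing C] [Algebra ℝ C]
    [AddCommGroup V] [Module C V] [AddCommGroup Ω] [Module ℝ Ω] [Module C Ω] where
  bra : V → V → V
  d : Ω → Ω
  ι : V → Ω → Ω
  lie : V → Ω → Ω
  app : V → C → C
  dC : C → Ω
  wdg : Ω → Ω → Ω
  bra_self : ∀ X, bra X X = 0
  bra_add_left : ∀ X Y Z, bra (X + Y) Z = bra X Z + bra Y Z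
  bra_add_right : ∀ X Y Z, bra X (Y + Z) = bra X Y + bra X Z
  bra_leibniz : ∀ X Y Z, bra X (bra Y Z) = bra (bra X Y) Z + bra Y (bra X Z)
  bra_smul_right : ∀ (f : C) (X Y), bra X (f • Y) = f • bra X Y + app X f • Y
  bra_smul_left : ∀ (f : C) (X Y), bra (f • X) Y = f • bra X Y - app Y f • X
  d_add : ∀ α β, d (α + β) = d α + d β
  d_rsmul : ∀ (r : ℝ) (α), d (r • α) = r • d α
  d_csmul : ∀ (f : C) (α), d (f • α) = wdg (dC f) α + f • d α
  d_d : ∀ α, d (d α) = 0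
  d_dC : ∀ f : C, d (dC f) = 0
  ι_addV : ∀ X Y α, ι (X + Y) α = ι X α + ι Y α
  ι_add : ∀ X α β, ι X (α + β) = ι X α + ι X β
  ι_rsmul : ∀ X (r : ℝ) (α), ι X (r • α) = r • ι X α
  ι_csmul : ∀ X (f : C) (α), ι X (f • α) = f • ι X α
  ι_smulV : ∀ (f : C) (X α), ι (f • X) α = f • ι X α
  ι_ι : ∀ X Y α, ι X (ι Y α) = - ι Y (ι X α)
  lie_add : ∀ X α β, lie X (α + β) = lie X α + lie X β
  lie_rsmul : ∀ X (r : ℝ) (α), lie X (r • α) = r • lie X α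
  lie_csmul : ∀ X (f : C) (α), lie X (f • α) = f • lie X α + app X f • α
  lie_smulV : ∀ (f : C) (X α), lie (f • X) α = f • lie X α + wdg (dC f) (ι X α)
  cartan : ∀ X α, lie X α = ι X (d α) + d (ι X α)
  d_lie : ∀ X α, d (lie X α) = lie X (d α)
  ι_bra : ∀ X Y α, ι (bra X Y) α = lie X (ι Y α) - ι Y (lie X α)
  lie_lie : ∀ X Y α, lie X (lie Y α) - lie Y (lie X α) = lie (bra X Y) α
  wdg_closed : ∀ α β, d α = 0 → d β = 0 → d (wdg α β) = 0

variable {C V Ω : Type*} [CommRing C] [Algebra ℝ C]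
  [AddCommGroup V] [Module C V] [AddCommGroup Ω] [Module ℝ Ω] [Module C Ω]

/-- The `Λⁿ⁻¹T*M`-valued pairing `⟨X+α, Y+β⟩ = ½(i_X β + i_Y α)`. -/
noncomputable def Pair (K : CartanCalculus C V Ω) (e₁ e₂ : V × Ω) : Ω :=
  (2 : ℝ)⁻¹ • (K.ι e₁.1 e₂.2 + K.ι e₂.1 e₁.2)

/-- The higher-order Courant bracket
`⟦X+α, Y+β⟧ = [X,Y] + L_X β − L_Y α + ½(d i_Y α − d i_X β)`. -/
noncomputable def Cour (K : CartanCalculus C V Ω) (e₁ e₂ : V × Ω) : V × Ω :=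
  (K.bra e₁.1 e₂.1,
    K.lie e₁.1 e₂.2 - K.lie e₂.1 e₁.2 +
      (2 : ℝ)⁻¹ • (K.d (K.ι e₂.1 e₁.2) - K.d (K.ι e₁.1 e₂.2)))

/-- `T(e₁,e₂,e₃) = −(1/3)(⟨⟦e₁,e₂⟧, e₃⟩ + c.p.)`. -/
noncomputable def CourT (K : CartanCalculus C V Ω) (e₁ e₂ e₃ : V × Ω) : Ω :=
  -(3 : ℝ)⁻¹ • (Pair K (Cour K e₁ e₂) e₃ + Pair K (Cour K e₂ e₃) e₁ + Pair K (Cour K e₃ e₁) e₂)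


section Aux
variable (K : CartanCalculus C V Ω)

lemma d_zero' : K.d (0 : Ω) = 0 := by
  have := K.d_rsmul 0 0; simpa using this

lemma ι_zero' (X : V) : K.ι X (0 : Ω) = 0 := by
  have := K.ι_rsmul X 0 0; simpa using this

lemma ι_neg' (X : V) (α : Ω) : K.ι X (-α) = -K.ι X α := by
  have := K.ι_rsmul X (-1) α; simpa using this

lemma d_neg' (α : Ω) : K.d (-α) = -K.d α := by
  have := K.d_rsmul (-1) α; simpa using this

lemma ι_sub' (X : V) (α β : Ω) : K.ι X (α - β) = K.ι X α - K.ι X β := by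
  rw [sub_eq_add_neg, K.ι_add, ι_neg' K, ← sub_eq_add_neg]

lemma d_sub' (α β : Ω) : K.d (α - β) = K.d α - K.d β := by
  rw [sub_eq_add_neg, K.d_add, d_neg' K, ← sub_eq_add_neg]

lemma ι_ι_self (X : V) (α : Ω) : K.ι X (K.ι X α) = 0 := by
  have h := K.ι_ι X X α
  have h2 : (2 : ℝ) • K.ι X (K.ι X α) = 0 := by
    rw [two_smul]; nth_rewrite 1 [h]; exact neg_add_cancel _
  have := congrArg (fun z => (2 : ℝ)⁻¹ • z) h2
  simpa [smul_smul] using this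

lemma bra_zero_right (X : V) : K.bra X (0 : V) = 0 := by
  have := K.bra_add_right X 0 0
  simpa using this.symm

lemma bra_neg_right (X Y : V) : K.bra X (-Y) = -K.bra X Y := by
  have h := K.bra_add_right X Y (-Y)
  rw [add_neg_cancel, bra_zero_right] at h
  exact (neg_eq_of_add_eq_zero_right h.symm).symm

lemma bra_antisymm (X Y : V) : K.bra X Y = -K.bra Y X := by
  have h := K.bra_self (X + Y)
  rw [K.bra_add_left, K.bra_add_right, K.bra_add_right, K.bra_self, K.bra_self] at h
  have h2 : K.bra X Y + K.bra Y X = 0 := by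
    have := h; abel_nf at this; linear_combination (norm := abel) this
  exact eq_neg_of_add_eq_zero_left h2

lemma bra_neg_left (X Y : V) : K.bra (-X) Y = -K.bra X Y := by
  rw [bra_antisymm K (-X) Y, bra_neg_right, bra_antisymm K X Y, neg_neg]

end Aux

/-- The higher-order Courant bracket satisfies the Jacobi identity up to an exact term:
`⟦e₁,⟦e₂,e₃⟧⟧ + c.p. = d T(e₁,e₂,e₃)`. -/
theorem courant_jacobi_up_to_exact (K : CartanCalculus C V Ω) (e₁ e₂ e₃ : V × Ω) :
    Cour K e₁ (Cour K e₂ e₃) + Cour K e₂ (Cour K e₃ e₁) + Cour K e₃ (Cour K e₁ e₂) =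
      ((0 : V), K.d (CourT K e₁ e₂ e₃)) := by
  have sw21 : ∀ α : Ω, K.ι e₂.1 (K.ι e₁.1 α) = -K.ι e₁.1 (K.ι e₂.1 α) := fun α => K.ι_ι _ _ _
  have sw31 : ∀ α : Ω, K.ι e₃.1 (K.ι e₁.1 α) = -K.ι e₁.1 (K.ι e₃.1 α) := fun α => K.ι_ι _ _ _
  have sw32 : ∀ α : Ω, K.ι e₃.1 (K.ι e₂.1 α) = -K.ι e₂.1 (K.ι e₃.1 α) := fun α => K.ι_ι _ _ _
  refine Prod.ext ?_ ?_
  · show K.bra e₁.1 (K.bra e₂.1 e₃.1) + K.bra e₂.1 (K.bra e₃.1 e₁.1) +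
      K.bra e₃.1 (K.bra e₁.1 e₂.1) = 0
    rw [K.bra_leibniz e₁.1 e₂.1 e₃.1,
      bra_antisymm K e₂.1 (K.bra e₃.1 e₁.1), bra_antisymm K e₃.1 e₁.1,
      bra_neg_left, bra_antisymm K e₃.1 (K.bra e₁.1 e₂.1),
      bra_antisymm K e₂.1 (K.bra e₁.1 e₃.1)]
    abel
  · show K.lie e₁.1 (Cour K e₂ e₃).2 - K.lie (Cour K e₂ e₃).1 e₁.2 +
        (2 : ℝ)⁻¹ • (K.d (K.ι (Cour K e₂ e₃).1 e₁.2) - K.d (K.ι e₁.1 (Cour K e₂ e₃).2)) +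
        (K.lie e₂.1 (Cour K e₃ e₁).2 - K.lie (Cour K e₃ e₁).1 e₂.2 +
        (2 : ℝ)⁻¹ • (K.d (K.ι (Cour K e₃ e₁).1 e₂.2) - K.d (K.ι e₂.1 (Cour K e₃ e₁).2))) +
        (K.lie e₃.1 (Cour K e₁ e₂).2 - K.lie (Cour K e₁ e₂).1 e₃.2 +
        (2 : ℝ)⁻¹ • (K.d (K.ι (Cour K e₁ e₂).1 e₃.2) - K.d (K.ι e₃.1 (Cour K e₁ e₂).2))) =
      K.d (CourT K e₁ e₂ e₃)
    simp only [Cour, CourT, Pair, K.cartan, K.ι_bra, K.d_add, K.d_rsmul, K.ι_add,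
      K.ι_rsmul, K.d_d, d_zero' K, ι_zero' K, d_neg' K, ι_neg' K, d_sub' K, ι_sub' K,
      ι_ι_self K, sw21, sw31, sw32, smul_add, smul_neg, smul_zero, smul_sub,
      add_zero, zero_add, neg_zero, neg_neg, sub_zero, zero_sub]
    module
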